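/- Let ρ : ℝ² → ℝ be smooth and compactly supported with ρ(t, −x) = ρ(t, x) for all (t,x) ∈ ℝ². Then: (i) ∬_{ℝ²×ℝ²} ∂ₜρ(z₁) · (G∗G')(z₁ − z₂) · ρ(z₂) dz₁ dz₂ = 0, where (G∗G')(v) := ∫_{ℝ²} G(v−w) G'(w) dw; and (ii) the iterated integral ∫_{ℝ²} G'(−z₁) · x₁ · ( ∫_{ℝ²} ∂ₜρ(z₁ − z₂) · (G'∗ρ)(−z₂) dz₂ ) dz₁ = 0, where x₁ denotes the spatial component of z₁ and (G'∗ρ)(w) := ∫_{ℝ²} G'(w−u) ρ(u) du. -/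
import Mathlib


open MeasureTheory

/-- The 1-dimensional heat kernel `G(t,x) = 1_{t>0} e^{−x²/(4t)}/√(4πt)`. -/
noncomputable def heatKernel (z : ℝ × ℝ) : ℝ :=
  if 0 < z.1 then Real.exp (-z.2 ^ 2 / (4 * z.1)) / Real.sqrt (4 * Real.pi * z.1) else 0

/-- The spatial derivative `G' = ∂ₓG` of the heat kernel. -/
noncomputable def heatKernelX (z : ℝ × ℝ) : ℝ :=
  deriv (fun y => heatKernel (z.1, y)) z.2

/-- Substituting `x ↦ -x` in the spatial variable preserves integrals on `ℝ × ℝ`. -/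
lemma integral_negSnd (f : ℝ × ℝ → ℝ) :
    (∫ z : ℝ × ℝ, f (z.1, -z.2)) = ∫ z : ℝ × ℝ, f z := by
  have hmp : MeasurePreserving (fun z : ℝ × ℝ => (z.1, -z.2)) volume volume := by
    rw [Measure.volume_eq_prod]
    exact (MeasurePreserving.id volume).prod (Measure.measurePreserving_neg volume)
  exact hmp.integral_comp
    (((MeasurableEquiv.refl ℝ).prodCongr (MeasurableEquiv.neg ℝ)).measurableEmbedding) f

/-- A function odd in the spatial variable integrates to zero. -/
lemma integral_odd_zero (f : ℝ × ℝ → ℝ) (hf : ∀ t x, f (t, -x) = - f (t, x)) :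
    (∫ z : ℝ × ℝ, f z) = 0 := by
  have h := integral_negSnd f
  have h2 : (∫ z : ℝ × ℝ, f (z.1, -z.2)) = - ∫ z : ℝ × ℝ, f z := by
    have : (fun z : ℝ × ℝ => f (z.1, -z.2)) = fun z => - f z := by
      funext z; rw [hf z.1 z.2]
    rw [this, integral_neg]
  rw [h] at h2
  linarith

lemma hK_even (t x : ℝ) : heatKernel (t, -x) = heatKernel (t, x) := by
  simp [heatKernel, neg_sq]

lemma hKX_odd (t x : ℝ) : heatKernelX (t, -x) = - heatKernelX (t, x) := by
  have h : (fun y => heatKernel (t, y)) = fun y => heatKernel (t, -y) := by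
    funext y; rw [hK_even]
  show deriv (fun y => heatKernel (t, y)) (-x) = - deriv (fun y => heatKernel (t, y)) x
  conv_lhs => rw [h]
  rw [deriv_comp_neg (f := fun y => heatKernel (t, y)), neg_neg]

/-- The convolution `G ∗ G'` is odd in the spatial variable. -/
lemma conv_odd (a b : ℝ) :
    (∫ w : ℝ × ℝ, heatKernel ((a, -b) - w) * heatKernelX w)
      = - ∫ w : ℝ × ℝ, heatKernel ((a, b) - w) * heatKernelX w := by
  rw [← integral_negSnd (fun w => heatKernel ((a, -b) - w) * heatKernelX w), ← integral_neg]
  congr 1; funext w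
  show heatKernel ((a, -b) - (w.1, -w.2)) * heatKernelX (w.1, -w.2)
      = -(heatKernel ((a, b) - w) * heatKernelX w)
  have h1 : ((a, -b) : ℝ × ℝ) - (w.1, -w.2) = (a - w.1, -(b - w.2)) := by
    simp [Prod.ext_iff]; ring
  have h2 : ((a, b) : ℝ × ℝ) - w = (a - w.1, b - w.2) := rfl
  rw [h1, h2, hK_even, hKX_odd]; ring

/-- The convolution `G' ∗ ρ` is odd in the spatial variable when `ρ` is even. -/
lemma convK_odd (ρ : ℝ × ℝ → ℝ) (heven : ∀ t x : ℝ, ρ (t, -x) = ρ (t, x)) (a b : ℝ) :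
    (∫ w : ℝ × ℝ, heatKernelX ((a, -b) - w) * ρ w)
      = - ∫ w : ℝ × ℝ, heatKernelX ((a, b) - w) * ρ w := by
  rw [← integral_negSnd (fun w => heatKernelX ((a, -b) - w) * ρ w), ← integral_neg]
  congr 1; funext w
  show heatKernelX ((a, -b) - (w.1, -w.2)) * ρ (w.1, -w.2)
      = -(heatKernelX ((a, b) - w) * ρ w)
  have h1 : ((a, -b) : ℝ × ℝ) - (w.1, -w.2) = (a - w.1, -(b - w.2)) := by
    simp [Prod.ext_iff]; ring
  have h2 : ((a, b) : ℝ × ℝ) - w = (a - w.1, b - w.2) := rfl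
  rw [h1, h2, hKX_odd, heven]; ring

/-- For mollifiers `ρ` that are even in the spatial variable, the two
renormalisation constants responsible for the moving frame in the KPZ limit of the
directed mean curvature flow vanish. -/
theorem stmt_17 (ρ : ℝ × ℝ → ℝ) (hρ : ContDiff ℝ (⊤ : ℕ∞) ρ) (hρc : HasCompactSupport ρ)
    (heven : ∀ t x : ℝ, ρ (t, -x) = ρ (t, x)) :
    -- (i)
    ((∫ z₁ : ℝ × ℝ, ∫ z₂ : ℝ × ℝ,
        deriv (fun s => ρ (s, z₁.2)) z₁.1
          * (∫ w : ℝ × ℝ, heatKernel (z₁ - z₂ - w) * heatKernelX w) * ρ z₂) = 0) ∧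
    -- (ii)
    ((∫ z₁ : ℝ × ℝ, heatKernelX (-z₁) * z₁.2 *
        (∫ z₂ : ℝ × ℝ, deriv (fun s => ρ (s, z₁.2 - z₂.2)) (z₁.1 - z₂.1)
          * (∫ w : ℝ × ℝ, heatKernelX (-z₂ - w) * ρ w))) = 0) := by
  have hder : ∀ x : ℝ, (fun s => ρ (s, -x)) = fun s => ρ (s, x) := by
    intro x; funext s; exact heven s x
  constructor
  · apply integral_odd_zero
    intro t x
    show (∫ z₂ : ℝ × ℝ, deriv (fun s => ρ (s, -x)) t
        * (∫ w : ℝ × ℝ, heatKernel ((t, -x) - z₂ - w) * heatKernelX w) * ρ z₂)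
      = - ∫ z₂ : ℝ × ℝ, deriv (fun s => ρ (s, x)) t
        * (∫ w : ℝ × ℝ, heatKernel ((t, x) - z₂ - w) * heatKernelX w) * ρ z₂
    rw [← integral_negSnd (fun z₂ => deriv (fun s => ρ (s, -x)) t
        * (∫ w : ℝ × ℝ, heatKernel ((t, -x) - z₂ - w) * heatKernelX w) * ρ z₂),
      ← integral_neg]
    congr 1; funext z₂
    show deriv (fun s => ρ (s, -x)) t
        * (∫ w : ℝ × ℝ, heatKernel ((t, -x) - (z₂.1, -z₂.2) - w) * heatKernelX w)
        * ρ (z₂.1, -z₂.2)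
      = -(deriv (fun s => ρ (s, x)) t
        * (∫ w : ℝ × ℝ, heatKernel ((t, x) - z₂ - w) * heatKernelX w) * ρ z₂)
    have h1 : ((t, -x) : ℝ × ℝ) - (z₂.1, -z₂.2) = (t - z₂.1, -(x - z₂.2)) := by
      simp [Prod.ext_iff]; ring
    have h2 : ((t, x) : ℝ × ℝ) - z₂ = (t - z₂.1, x - z₂.2) := rfl
    rw [hder x, h1, h2, conv_odd, heven]
    ring
  · apply integral_odd_zero
    intro t x
    show heatKernelX (-(t, -x)) * (-x) *
        (∫ z₂ : ℝ × ℝ, deriv (fun s => ρ (s, -x - z₂.2)) (t - z₂.1)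
          * (∫ w : ℝ × ℝ, heatKernelX (-z₂ - w) * ρ w))
      = -(heatKernelX (-(t, x)) * x *
        (∫ z₂ : ℝ × ℝ, deriv (fun s => ρ (s, x - z₂.2)) (t - z₂.1)
          * (∫ w : ℝ × ℝ, heatKernelX (-z₂ - w) * ρ w)))
    have hA : heatKernelX (-(t, -x) : ℝ × ℝ) = - heatKernelX (-(t, x) : ℝ × ℝ) := by
      have e1 : (-(t, -x) : ℝ × ℝ) = (-t, x) := by simp [Prod.ext_iff]
      have e2 : (-(t, x) : ℝ × ℝ) = (-t, -x) := by simp [Prod.ext_iff]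
      rw [e1, e2, hKX_odd]; ring
    have hI : (∫ z₂ : ℝ × ℝ, deriv (fun s => ρ (s, -x - z₂.2)) (t - z₂.1)
          * (∫ w : ℝ × ℝ, heatKernelX (-z₂ - w) * ρ w))
        = - ∫ z₂ : ℝ × ℝ, deriv (fun s => ρ (s, x - z₂.2)) (t - z₂.1)
          * (∫ w : ℝ × ℝ, heatKernelX (-z₂ - w) * ρ w) := by
      rw [← integral_negSnd (fun z₂ => deriv (fun s => ρ (s, -x - z₂.2)) (t - z₂.1)
          * (∫ w : ℝ × ℝ, heatKernelX (-z₂ - w) * ρ w)), ← integral_neg]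
      congr 1; funext z₂
      show deriv (fun s => ρ (s, -x - -z₂.2)) (t - z₂.1)
          * (∫ w : ℝ × ℝ, heatKernelX (-(z₂.1, -z₂.2) - w) * ρ w)
        = -(deriv (fun s => ρ (s, x - z₂.2)) (t - z₂.1)
          * (∫ w : ℝ × ℝ, heatKernelX (-z₂ - w) * ρ w))
      have hd : (fun s => ρ (s, -x - -z₂.2)) = fun s => ρ (s, x - z₂.2) := by
        funext s
        have : -x - -z₂.2 = -(x - z₂.2) := by ring
        rw [this, heven]
      have hK : (∫ w : ℝ × ℝ, heatKernelX (-(z₂.1, -z₂.2) - w) * ρ w)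
          = - ∫ w : ℝ × ℝ, heatKernelX (-z₂ - w) * ρ w := by
        have e1 : ∀ w : ℝ × ℝ, -(z₂.1, -z₂.2) - w = ((-z₂.1, -(-z₂.2)) : ℝ × ℝ) - w := by
          intro w; simp [Prod.ext_iff]
        have e2 : ∀ w : ℝ × ℝ, -z₂ - w = ((-z₂.1, -z₂.2) : ℝ × ℝ) - w := by
          intro w; rfl
        simp_rw [e1, e2]
        exact convK_odd ρ heven (-z₂.1) (-z₂.2)
      rw [hd, hK]; ring
    rw [hA, hI]; ring
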